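/- Let T be a spanning tree of the star graph G_k with dist_T(r,v) = dist_{G_k}(r,v) for all v. Then in T, each c vertex and each d vertex has exactly one T-neighbor, which is some b vertex, and for any c vertex c_S and any i ∈ S, dist_T(c_S, d_i) = 2 if c_S and d_i have the same b-parent in T, and dist_T(c_S, d_i) = 4 otherwise; in particular dist_T(c_S,d_i) ∈ {2,4} while dist_{G_k}(c_S,d_i) = 1. -/

import Mathlib

/-!
Every vertex of `G_k` lies within distance two of `r`, so in a tree `T` preserving these
distances every vertex `v` at distance two is a leaf: a second neighbour `u` besides its parent
`m` would make `r - m - v - u` a path, and paths in a tree are geodesics, so `u` would be at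
distance three. As all neighbours of `r` are `b` vertices, the parent is a `b` vertex. The
distance from `c_S` to `d_i` is then the length of the tree path `c_S - b - d_i` or
`c_S - b_p - r - b_q - d_i`.
-/

open SimpleGraph

/-- Vertices of the star graph G_k: the root `r`, the clique vertices
`b i` and `d i` for i < 2^k, and, for every dyadic interval of {0,...,2^k-1}
(given by a level `t ≤ k` and an index `j < 2^t`), a vertex `c t j`. -/
inductive SVtx (k : ℕ) : Type
  | r : SVtx k
  | b : Fin (2 ^ k) → SVtx k
  | d : Fin (2 ^ k) → SVtx k
  | c : (t : Fin (k + 1)) → Fin (2 ^ (t : ℕ)) → SVtx k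

/-- r is adjacent to all b's; the b's and d's together form a clique;
`c t j` is adjacent exactly to the b_i and d_i with i in the dyadic interval
{ i | i / 2^(k-t) = j }. -/
def starRel (k : ℕ) : SVtx k → SVtx k → Prop
  | .r, .b _ => True
  | .b _, .b _ => True
  | .d _, .d _ => True
  | .b _, .d _ => True
  | .c t j, .b i => (i : ℕ) / 2 ^ (k - (t : ℕ)) = (j : ℕ)
  | .c t j, .d i => (i : ℕ) / 2 ^ (k - (t : ℕ)) = (j : ℕ)
  | _, _ => False

def starG (k : ℕ) : SimpleGraph (SVtx k) := SimpleGraph.fromRel (starRel k)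

namespace SimpleGraph

variable {V : Type*} {G : SimpleGraph V} {u v w : V}

lemma dist_eq_two_of_adj_of_adj (hne : u ≠ w) (hnadj : ¬G.Adj u w) (huv : G.Adj u v)
    (hvw : G.Adj v w) : G.dist u w = 2 := by
  let p : G.Walk u w := .cons huv (.cons hvw .nil)
  have hle : G.dist u w ≤ 2 := dist_le p
  have hlt : 1 < G.dist u w := p.reachable.one_lt_dist_of_ne_of_not_adj hne hnadj
  omega

lemma exists_adj_adj_of_dist_eq_two (h : G.dist u w = 2) : ∃ v, G.Adj u v ∧ G.Adj v w := by
  have hreach : G.Reachable u w := .of_dist_ne_zero (by omega)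
  have hedist : G.edist u w = 2 := by rw [← hreach.coe_dist_eq_edist, h]; rfl
  obtain ⟨-, -, v, hv⟩ := edist_eq_two_iff.mp hedist
  rw [mem_commonNeighbors] at hv
  exact ⟨v, hv.1, hv.2.symm⟩

lemma IsAcyclic.dist_eq_length_of_isPath (hG : G.IsAcyclic) {p : G.Walk u v}
    (hp : p.IsPath) : G.dist u v = p.length := by
  obtain ⟨q, hq, hlen⟩ := p.reachable.exists_path_of_dist
  have hqp : (⟨q, hq⟩ : G.Path u v) = ⟨p, hp⟩ := (hG.subsingleton_path u v).elim _ _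
  rw [← hlen, show q = p from congrArg Subtype.val hqp]

lemma IsAcyclic.eq_of_adj_of_dist_eq_two (hG : G.IsAcyclic) {r m v u : V} (hrm : G.Adj r m)
    (hmv : G.Adj m v) (hv : G.dist r v = 2) (hvu : G.Adj v u) (hu : G.dist r u ≤ 2) :
    u = m := by
  by_contra hum
  have hrv : r ≠ v := by rintro rfl; simp at hv
  have hru : r ≠ u := by
    rintro rfl
    rw [dist_eq_one_iff_adj.mpr hvu.symm] at hv
    omega
  let p : G.Walk r u := .cons hrm (.cons hmv (.cons hvu .nil))
  have hp : p.IsPath := by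
    simp [p, Walk.isPath_def, hrm.ne, hmv.ne, hvu.ne, hrv, hru, Ne.symm hum]
  have := hG.dist_eq_length_of_isPath hp
  simp only [p, Walk.length_cons, Walk.length_nil] at this
  omega

lemma IsAcyclic.exists_adj_iff_eq_of_dist_eq_two (hG : G.IsAcyclic) {r v : V}
    (hdepth : ∀ u, G.dist r u ≤ 2) (hv : G.dist r v = 2) :
    ∃ m, G.Adj r m ∧ ∀ u, G.Adj v u ↔ u = m := by
  obtain ⟨m, hrm, hmv⟩ := exists_adj_adj_of_dist_eq_two hv
  refine ⟨m, hrm, fun u => ⟨fun hvu => ?_, fun h => h ▸ hmv.symm⟩⟩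
  exact hG.eq_of_adj_of_dist_eq_two hrm hmv hv hvu (hdepth u)

end SimpleGraph

namespace SVtx

variable {k : ℕ}

lemma starG_adj_r_b (i : Fin (2 ^ k)) : (starG k).Adj r (b i) := by
  simp [starG, starRel]

lemma starG_adj_b_d (i i' : Fin (2 ^ k)) : (starG k).Adj (b i) (d i') := by
  simp [starG, starRel]

lemma starG_adj_c_b {t : Fin (k + 1)} {j : Fin (2 ^ (t : ℕ))} {i : Fin (2 ^ k)}
    (h : (i : ℕ) / 2 ^ (k - (t : ℕ)) = (j : ℕ)) : (starG k).Adj (c t j) (b i) := by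
  simp [starG, starRel, h]

lemma starG_adj_c_d {t : Fin (k + 1)} {j : Fin (2 ^ (t : ℕ))} {i : Fin (2 ^ k)}
    (h : (i : ℕ) / 2 ^ (k - (t : ℕ)) = (j : ℕ)) : (starG k).Adj (c t j) (d i) := by
  simp [starG, starRel, h]

lemma exists_eq_b_of_starG_adj_r {u : SVtx k} (h : (starG k).Adj r u) : ∃ p, u = b p := by
  cases u <;> simp_all [starG, starRel]

lemma exists_div_pow_eq (t : Fin (k + 1)) (j : Fin (2 ^ (t : ℕ))) :
    ∃ i : Fin (2 ^ k), (i : ℕ) / 2 ^ (k - (t : ℕ)) = (j : ℕ) := by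
  have hpos : 0 < 2 ^ (k - (t : ℕ)) := Nat.two_pow_pos _
  refine ⟨⟨j * 2 ^ (k - t), ?_⟩, Nat.mul_div_cancel _ hpos⟩
  calc (j : ℕ) * 2 ^ (k - t) < 2 ^ (t : ℕ) * 2 ^ (k - t) :=
        Nat.mul_lt_mul_of_pos_right j.isLt hpos
    _ = 2 ^ k := by rw [← pow_add, Nat.add_sub_cancel' (Nat.lt_succ_iff.mp t.isLt)]

lemma starG_dist_r_b (i : Fin (2 ^ k)) : (starG k).dist r (b i) = 1 :=
  dist_eq_one_iff_adj.mpr (starG_adj_r_b i)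

lemma starG_dist_r_d (i : Fin (2 ^ k)) : (starG k).dist r (d i) = 2 :=
  dist_eq_two_of_adj_of_adj (by simp) (by simp [starG, starRel]) (starG_adj_r_b i)
    (starG_adj_b_d i i)

lemma starG_dist_r_c (t : Fin (k + 1)) (j : Fin (2 ^ (t : ℕ))) :
    (starG k).dist r (c t j) = 2 := by
  obtain ⟨i, hi⟩ := exists_div_pow_eq t j
  exact dist_eq_two_of_adj_of_adj (by simp) (by simp [starG, starRel]) (starG_adj_r_b i)
    (starG_adj_c_b hi).symm

lemma starG_dist_r_le_two (v : SVtx k) : (starG k).dist r v ≤ 2 := by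
  cases v with
  | r => simp
  | b i => simp [starG_dist_r_b]
  | d i => simp [starG_dist_r_d]
  | c t j => simp [starG_dist_r_c]

lemma exists_b_parent {T : SimpleGraph (SVtx k)} (hle : T ≤ starG k) (hacyc : T.IsAcyclic)
    (hdist : ∀ v, T.dist r v = (starG k).dist r v) {v : SVtx k} (hv : (starG k).dist r v = 2) :
    ∃ p, T.Adj r (b p) ∧ ∀ u, T.Adj v u ↔ u = b p := by
  obtain ⟨m, hrm, hm⟩ := hacyc.exists_adj_iff_eq_of_dist_eq_two
    (fun u => (hdist u).trans_le (starG_dist_r_le_two u)) ((hdist v).trans hv)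
  obtain ⟨p, rfl⟩ := exists_eq_b_of_starG_adj_r (hle hrm)
  exact ⟨p, hrm, hm⟩

end SVtx

open SVtx

/-- In any distance-from-r-preserving (fast connecting) spanning tree T of the
star graph G_k: every d vertex and every c vertex has a unique T-neighbor, which
is a b vertex; and for a c vertex c_S (S the dyadic set at level t index j) and
any i ∈ S, dist_T(c_S, d_i) = 2 if they share their b-parent in T and = 4
otherwise — while dist_G(c_S, d_i) = 1. -/
theorem stmt12 :
    ∀ k : ℕ, ∀ T : SimpleGraph (SVtx k),
      T ≤ starG k → T.Connected → T.IsAcyclic →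
      (∀ v : SVtx k, T.dist .r v = (starG k).dist .r v) →
      (∀ i, ∃ p, ∀ u, T.Adj (.d i) u ↔ u = .b p) ∧
      (∀ (t : Fin (k + 1)) (j : Fin (2 ^ (t : ℕ))),
        ∃ p, ∀ u, T.Adj (.c t j) u ↔ u = .b p) ∧
      (∀ (t : Fin (k + 1)) (j : Fin (2 ^ (t : ℕ))) (i : Fin (2 ^ k)),
        (i : ℕ) / 2 ^ (k - (t : ℕ)) = (j : ℕ) →
        ((∃ p, T.Adj (.c t j) (.b p) ∧ T.Adj (.d i) (.b p)) →
          T.dist (.c t j) (.d i) = 2) ∧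
        ((¬ ∃ p, T.Adj (.c t j) (.b p) ∧ T.Adj (.d i) (.b p)) →
          T.dist (.c t j) (.d i) = 4) ∧
        (starG k).dist (.c t j) (.d i) = 1) := by
  intro k T hle _ hacyc hdist
  have parent {v : SVtx k} (hv : (starG k).dist .r v = 2) :
      ∃ p, T.Adj .r (.b p) ∧ ∀ u, T.Adj v u ↔ u = .b p :=
    exists_b_parent hle hacyc hdist hv
  refine ⟨fun i => (parent (starG_dist_r_d i)).imp fun _ => And.right,
    fun t j => (parent (starG_dist_r_c t j)).imp fun _ => And.right, fun t j i hij => ?_⟩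
  obtain ⟨p, hrp, hp⟩ := parent (starG_dist_r_c t j)
  obtain ⟨q, hrq, hq⟩ := parent (starG_dist_r_d i)
  have hcp : T.Adj (.c t j) (.b p) := (hp _).mpr rfl
  have hdq : T.Adj (.d i) (.b q) := (hq _).mpr rfl
  have shared_iff : (∃ p', T.Adj (.c t j) (.b p') ∧ T.Adj (.d i) (.b p')) ↔ p = q := by
    refine ⟨fun ⟨p', hc, hd⟩ => ?_, fun h => ⟨p, hcp, h ▸ hdq⟩⟩
    simpa using ((hp _).mp hc).symm.trans ((hq _).mp hd)
  refine ⟨fun h => ?_, fun h => ?_, dist_eq_one_iff_adj.mpr (starG_adj_c_d hij)⟩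
  · obtain rfl := shared_iff.mp h
    exact hacyc.dist_eq_length_of_isPath (p := .cons hcp (.cons hdq.symm .nil)) (by simp)
  · have hpq : p ≠ q := mt shared_iff.mpr h
    exact hacyc.dist_eq_length_of_isPath
      (p := .cons hcp (.cons hrp.symm (.cons hrq (.cons hdq.symm .nil)))) (by simp [hpq])
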